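/- In A = ℂ[x¹,x²,x³], fix ν, a ∈ ℝ, let L₁₂ := x¹·∂₂ − a·x²·∂₁ (a derivation of A), and define the star product α⋆β := Σ_{n≥0} ((−iν)ⁿ/n!)·∂₃ⁿ(α)·L₁₂ⁿ(β), a finite sum since ∂₃ is locally nilpotent on polynomials. Then: (i) x³⋆x¹ = x¹x³ + iν·a·x²; (ii) x³⋆x² = x²x³ − iν·x¹; (iii) x¹⋆x² = x²⋆x¹ = x¹x²; and (iv) for every c ∈ ℝ the polynomial f_c := (1/2)((x¹)² + a(x²)²) − c defining an elliptic cylinder is ⋆-central and undeformed: α⋆f_c = α·f_c = f_c⋆α for all α ∈ A. -/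

import Mathlib

/-!
`∂₃` kills `x¹`, `x²` and `f_c` and satisfies `∂₃² x³ = 0`, while `L₁₂` is the infinitesimal
rotation of the ellipses `(x¹)² + a (x²)² = const`, so it kills `f_c`. Hence every star product
in the statement truncates after its zeroth or first term.
-/

open MvPolynomial
open scoped BigOperators

namespace EllipticCylinderStar

/-- `L₁₂ := x¹·∂₂ − a·x²·∂₁` as a derivation of `ℂ[x¹,x²,x³]`. -/
noncomputable def L12 (a : ℝ) :
    Derivation ℂ (MvPolynomial (Fin 3) ℂ) (MvPolynomial (Fin 3) ℂ) :=
  (X 0 : MvPolynomial (Fin 3) ℂ) • pderiv 1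
    - ((C (a : ℂ) * X 1 : MvPolynomial (Fin 3) ℂ)) • pderiv 0

/-- The abelian-twist star product
`α ⋆ β := Σ_{n≥0} ((−iν)ⁿ/n!)·∂₃ⁿ(α)·L₁₂ⁿ(β)` (a finite sum). -/
noncomputable def star (ν a : ℝ) (α β : MvPolynomial (Fin 3) ℂ) :
    MvPolynomial (Fin 3) ℂ :=
  ∑ᶠ n : ℕ, (((-(Complex.I * ν)) ^ n / n.factorial : ℂ)) •
    (((pderiv 2 : Derivation ℂ (MvPolynomial (Fin 3) ℂ)
        (MvPolynomial (Fin 3) ℂ)).toLinearMap ^ n) α *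
      ((L12 a).toLinearMap ^ n) β)

/-- The elliptic cylinder `f_c := (1/2)((x¹)² + a(x²)²) − c`. -/
noncomputable def fc (a c : ℝ) : MvPolynomial (Fin 3) ℂ :=
  C (1 / 2 : ℂ) * ((X 0) ^ 2 + C (a : ℂ) * (X 1) ^ 2) - C (c : ℂ)

local notation "∂₃" => (pderiv 2 : Derivation ℂ (MvPolynomial (Fin 3) ℂ) (MvPolynomial (Fin 3) ℂ))

variable (ν a : ℝ)

theorem star_eq_mul_of_forall_ne_zero (α β : MvPolynomial (Fin 3) ℂ)
    (h : ∀ n ≠ 0, ((∂₃.toLinearMap ^ n) α * ((L12 a).toLinearMap ^ n) β) = 0) :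
    star ν a α β = α * β := by
  rw [star, finsum_eq_single _ 0 fun n hn => by rw [h n hn, smul_zero]]
  simp

theorem star_eq_mul_of_pderiv_eq_zero {α : MvPolynomial (Fin 3) ℂ} (h : ∂₃ α = 0)
    (β : MvPolynomial (Fin 3) ℂ) : star ν a α β = α * β :=
  star_eq_mul_of_forall_ne_zero ν a α β fun n hn => by
    rw [Module.End.pow_map_zero_of_le (k := 1) (by omega) (by simpa using h), zero_mul]

theorem star_eq_mul_of_L12_eq_zero (α : MvPolynomial (Fin 3) ℂ) {β : MvPolynomial (Fin 3) ℂ}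
    (h : L12 a β = 0) : star ν a α β = α * β :=
  star_eq_mul_of_forall_ne_zero ν a α β fun n hn => by
    rw [Module.End.pow_map_zero_of_le (f := (L12 a).toLinearMap) (k := 1) (by omega)
      (by simpa using h), mul_zero]

theorem star_X_two (β : MvPolynomial (Fin 3) ℂ) :
    star ν a (X 2) β = X 2 * β - C (Complex.I * ν) * L12 a β := by
  have hX : (∂₃.toLinearMap ^ 2) (X 2) = 0 := by simp [pow_two]
  rw [star, finsum_eq_sum_of_support_subset (s := Finset.range 2)]
  · simp only [Finset.sum_range_succ, Finset.sum_range_zero, zero_add, pow_zero, pow_one,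
      Nat.factorial_zero, Nat.factorial_one, Nat.cast_one, div_one, Module.End.one_apply,
      Derivation.coeFn_coe, pderiv_X_self, one_mul, smul_eq_C_mul, C_mul, map_one, map_neg]
    ring
  · intro n hn
    by_contra hn2
    refine hn ?_
    dsimp only
    rw [Module.End.pow_map_zero_of_le (by simp at hn2; omega) hX, zero_mul, smul_zero]

theorem L12_X_zero : L12 a (X 0) = -(C (a : ℂ) * X 1) := by
  simp [L12, pderiv_X]

theorem L12_X_one : L12 a (X 1) = X 0 := by
  simp [L12, pderiv_X]

theorem L12_fc (c : ℝ) : L12 a (fc a c) = 0 := by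
  simp only [L12, fc, Derivation.coe_sub, Derivation.coe_smul, Pi.sub_apply, Pi.smul_apply,
    map_sub, map_add, Derivation.leibniz, Derivation.leibniz_pow, derivation_C, pderiv_X_self,
    pderiv_X_of_ne (show (0 : Fin 3) ≠ 1 by decide), pderiv_X_of_ne (show (1 : Fin 3) ≠ 0 by decide),
    smul_eq_mul, nsmul_eq_mul]
  ring

theorem pderiv_two_fc (c : ℝ) : pderiv 2 (fc a c) = 0 := by
  simp [fc, pderiv_X]

end EllipticCylinderStar

open EllipticCylinderStar in
/-- Star products of coordinates for the twisted elliptic cylinders: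
(i) `x³⋆x¹ = x¹x³ + iν·a·x²`; (ii) `x³⋆x² = x²x³ − iν·x¹`;
(iii) `x¹⋆x² = x²⋆x¹ = x¹x²`; and (iv) each `f_c` is ⋆-central and
undeformed. -/
theorem statement19 (ν a : ℝ) :
    (EllipticCylinderStar.star ν a (X 2) (X 0)
        = X 0 * X 2 + C (Complex.I * ν * a) * X 1) ∧
    (EllipticCylinderStar.star ν a (X 2) (X 1)
        = X 1 * X 2 - C (Complex.I * (ν : ℂ)) * X 0) ∧
    (EllipticCylinderStar.star ν a (X 0) (X 1) = X 0 * X 1 ∧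
      EllipticCylinderStar.star ν a (X 1) (X 0) = X 0 * X 1) ∧
    (∀ c : ℝ, ∀ α : MvPolynomial (Fin 3) ℂ,
      EllipticCylinderStar.star ν a α (fc a c) = α * fc a c ∧
      EllipticCylinderStar.star ν a (fc a c) α = fc a c * α) := by
  refine ⟨?_, ?_, ⟨?_, ?_⟩, fun c α => ⟨?_, ?_⟩⟩
  · rw [star_X_two, L12_X_zero]
    simp only [map_mul]
    ring
  · rw [star_X_two, L12_X_one, mul_comm]
  · exact star_eq_mul_of_pderiv_eq_zero ν a (pderiv_X_of_ne (by decide)) _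
  · rw [star_eq_mul_of_pderiv_eq_zero ν a (pderiv_X_of_ne (by decide)), mul_comm]
  · exact star_eq_mul_of_L12_eq_zero ν a α (L12_fc a c)
  · exact star_eq_mul_of_pderiv_eq_zero ν a (pderiv_two_fc a c) α
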